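/- For real numbers a, b, c, the cubic t^3 - a*t^2 + b*t - c factors over the reals as (t - x)(t - y)(t - z) for some real x, y, z if and only if 4*(b - a^2/3)^3 + 27*(c - a*b/3 + 2*a^3/27)^2 ≤ 0. -/
import Mathlib

set_option maxHeartbeats 1000000 in
theorem stmt4 (a b c : ℝ) :
    (∃ x y z : ℝ, ∀ t : ℝ, t^3 - a*t^2 + b*t - c = (t - x)*(t - y)*(t - z)) ↔
    4*(b - a^2/3)^3 + 27*(c - a*b/3 + 2*a^3/27)^2 ≤ 0 := by
  constructor
  · rintro ⟨x, y, z, h⟩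
    have h0 := h 0
    have h1 := h 1
    have hm1 := h (-1)
    have h2 := h 2
    have ha : a = x + y + z := by ring_nf at h0 h1 hm1 h2 ⊢; linarith
    have hb : b = x*y + y*z + x*z := by ring_nf at h0 h1 hm1 h2 ⊢; linarith
    have hc : c = x*y*z := by ring_nf at h0 h1 hm1 h2 ⊢; linarith
    subst ha hb hc
    nlinarith [sq_nonneg ((x-y)*(y-z)*(x-z))]
  · intro hd
    -- find a real root by IVT
    have hcont : Continuous fun t : ℝ => t^3 - a*t^2 + b*t - c := by fun_prop
    set M : ℝ := 1 + |a| + |b| + |c| with hM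
    have hM1 : 1 ≤ M := by
      have := abs_nonneg a; have := abs_nonneg b; have := abs_nonneg c; linarith
    have hMa : a ≤ M ∧ -M ≤ a := by
      have h1 := le_abs_self a; have h2 := neg_abs_le a
      have := abs_nonneg b; have := abs_nonneg c
      constructor <;> linarith
    have hfM : (0:ℝ) ≤ M^3 - a*M^2 + b*M - c := by
      have ha1 := le_abs_self a
      have hb1 := neg_abs_le b
      have hc1 := le_abs_self c
      nlinarith [sq_nonneg M, abs_nonneg a, abs_nonneg b, abs_nonneg c,
        mul_nonneg (mul_nonneg (by linarith : (0:ℝ) ≤ M) (by linarith : (0:ℝ) ≤ M)) (sub_nonneg.2 ha1),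
        mul_nonneg (by linarith : (0:ℝ) ≤ M) (sub_nonneg.2 (neg_abs_le b)),
        mul_nonneg (mul_nonneg (by linarith : (0:ℝ) ≤ M) (by linarith : (0:ℝ) ≤ M)) (abs_nonneg b),
        mul_nonneg (mul_nonneg (by linarith : (0:ℝ) ≤ M) (by linarith : (0:ℝ) ≤ M)) (abs_nonneg c)]
    have hfmM : (-M)^3 - a*(-M)^2 + b*(-M) - c ≤ 0 := by
      have ha1 := neg_abs_le a
      have hb1 := neg_abs_le b
      have hc1 := neg_abs_le c
      nlinarith [sq_nonneg M, abs_nonneg a, abs_nonneg b, abs_nonneg c,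
        mul_nonneg (mul_nonneg (by linarith : (0:ℝ) ≤ M) (by linarith : (0:ℝ) ≤ M)) (sub_nonneg.2 ha1),
        mul_nonneg (by linarith : (0:ℝ) ≤ M) (sub_nonneg.2 hb1),
        mul_nonneg (mul_nonneg (by linarith : (0:ℝ) ≤ M) (by linarith : (0:ℝ) ≤ M)) (abs_nonneg b),
        mul_nonneg (mul_nonneg (by linarith : (0:ℝ) ≤ M) (by linarith : (0:ℝ) ≤ M)) (abs_nonneg c)]
    have hsub := intermediate_value_Icc (by linarith : (-M) ≤ M) hcont.continuousOn
    have hmem : (0:ℝ) ∈ Set.Icc ((-M)^3 - a*(-M)^2 + b*(-M) - c) (M^3 - a*M^2 + b*M - c) :=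
      ⟨hfmM, hfM⟩
    obtain ⟨x, -, hx⟩ := hsub hmem
    simp only at hx
    -- hx : x^3 - a*x^2 + b*x - c = 0
    have hD3 : 3*(x - a/3)^2 + 4*(b - a^2/3) ≤ 0 := by
      have hq : (x - a/3)^3 + (b - a^2/3)*(x - a/3) = c - (a*b/3 - 2*a^3/27) := by
        linear_combination hx
      have heq : 4*(b - a^2/3)^3 + 27*(c - a*b/3 + 2*a^3/27)^2 =
          (3*(x - a/3)^2 + 4*(b - a^2/3))*(3*(x - a/3)^2 + (b - a^2/3))^2 := by
        linear_combination (-27*(c - a*b/3 + 2*a^3/27 + (x - a/3)^3 + (b - a^2/3)*(x - a/3))) * hx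
      by_contra h'
      push_neg at h'
      nlinarith [heq, hd, mul_pos (mul_pos h' h') h', sq_nonneg (x - a/3),
        mul_nonneg (sq_nonneg (x - a/3)) h'.le,
        mul_nonneg (mul_nonneg (sq_nonneg (x - a/3)) (sq_nonneg (x - a/3))) h'.le,
        mul_nonneg (mul_pos h' h').le (sq_nonneg (x - a/3))]
    have hD : 0 ≤ (x - a)^2 - 4*(x^2 - a*x + b) := by nlinarith [hD3]
    set r : ℝ := Real.sqrt ((x - a)^2 - 4*(x^2 - a*x + b)) with hrdef
    have hr : r^2 = (x - a)^2 - 4*(x^2 - a*x + b) := Real.sq_sqrt hD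
    refine ⟨x, ((a - x) + r)/2, ((a - x) - r)/2, fun t => ?_⟩
    linear_combination hx + ((t - x)/4) * hr
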